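/- arXiv:1505.00954 — 2 statements merged into one kernel-verified Lean document; each statement's English description precedes it below -/
import Mathlib

section
/- Let A : [0,1] → ℝ satisfy max(t, 1−t) ≤ A(t) ≤ 1 for all t ∈ [0,1], let C be the associated bivariate extreme-value copula, and let μ be a probability measure on ℝ² such that μ{(x,y) : x ≤ u and y ≤ v} = C(u,v) for all (u,v) ∈ [0,1]². Then for every t ∈ (0,1), the quantity S(t) = ∫ max(x₁^{1/(1−t)}, x₂^{1/t}) dμ(x₁,x₂) equals A(t)/(1 + A(t)), and consequently A(t) = S(t)/(1 − S(t)). -/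
open MeasureTheory

/-- The bivariate extreme-value copula associated with a Pickands dependence
function `A : [0,1] → ℝ`. -/
noncomputable def evCopula (A : ℝ → ℝ) (u v : ℝ) : ℝ :=
  if u = 0 ∨ v = 0 then 0
  else if u = 1 ∧ v = 1 then 1
  else Real.exp ((Real.log u + Real.log v) * A (Real.log v / (Real.log u + Real.log v)))

/-!
The pair `(U, V)` lives in `(0,1]²`, where `max(U^{1/(1-t)}, V^{1/t}) ≤ s` is the event
`U ≤ s^{1-t}, V ≤ s^t`. Along this curve `log V / (log U + log V) = t`, so the copula equals
`s^{A(t)}`: the variable `max(U^{1/(1-t)}, V^{1/t})` has distribution function `s ↦ s^{A(t)}` on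
`[0,1]`, and by the layer-cake formula its mean is `∫₀¹ (1 - s^{A(t)}) ds = A(t)/(1 + A(t))`.
-/

open Set Real

lemma evCopula_rpow_one_sub_rpow (A : ℝ → ℝ) (t : ℝ) {s : ℝ} (hs : s ∈ Ioo 0 1) :
    evCopula A (s ^ (1 - t)) (s ^ t) = s ^ A t := by
  obtain ⟨hs0, hs1⟩ := hs
  have hlog : log s ≠ 0 := (log_neg hs0 hs1).ne
  have hprod : s ^ (1 - t) * s ^ t = s := by
    rw [← rpow_add hs0, sub_add_cancel, rpow_one]
  have hnot11 : ¬(s ^ (1 - t) = 1 ∧ s ^ t = 1) := fun ⟨h1, h2⟩ => by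
    rw [h1, h2, one_mul] at hprod; exact hs1.ne' hprod
  rw [evCopula, if_neg (by simp [(rpow_pos_of_pos hs0 _).ne']), if_neg hnot11,
    log_rpow hs0, log_rpow hs0, ← add_mul, sub_add_cancel, one_mul, mul_div_assoc,
    div_self hlog, mul_one, rpow_def_of_pos hs0]

lemma max_rpow_inv_le_iff {x y s t : ℝ} (hx : 0 ≤ x) (hy : 0 ≤ y) (hs : 0 ≤ s)
    (ht : t ∈ Ioo 0 1) :
    max (x ^ (1 / (1 - t))) (y ^ (1 / t)) ≤ s ↔ x ≤ s ^ (1 - t) ∧ y ≤ s ^ t := by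
  rw [max_le_iff, one_div, one_div, rpow_inv_le_iff_of_pos hx hs (sub_pos.2 ht.2),
    rpow_inv_le_iff_of_pos hy hs ht.1]

lemma max_rpow_mem_Icc {x y r q : ℝ} (hx : x ∈ Icc 0 1) (hy : y ∈ Icc 0 1) (hr : 0 ≤ r)
    (hq : 0 ≤ q) : max (x ^ r) (y ^ q) ∈ Icc 0 1 :=
  ⟨(rpow_nonneg hx.1 r).trans (le_max_left _ _),
    max_le (rpow_le_one hx.1 hx.2 hr) (rpow_le_one hy.1 hy.2 hq)⟩

lemma integral_Ioo_zero_one_one_sub_rpow {a : ℝ} (ha : -1 < a) :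
    ∫ s in Ioo (0 : ℝ) 1, (1 - s ^ a) = a / (1 + a) := by
  have ha1 : a + 1 ≠ 0 := by linarith
  rw [← integral_Ioc_eq_integral_Ioo, ← intervalIntegral.integral_of_le zero_le_one,
    intervalIntegral.integral_sub intervalIntegrable_const
      (intervalIntegral.intervalIntegrable_rpow' ha),
    intervalIntegral.integral_const, integral_rpow (Or.inl ha), one_rpow, zero_rpow ha1,
    sub_zero, smul_eq_mul, mul_one, add_comm 1 a]
  field_simp
  ring

lemma ae_mem_Ioc_prod_Ioc {μ : Measure (ℝ × ℝ)} [IsProbabilityMeasure μ]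
    (h11 : μ {p : ℝ × ℝ | p.1 ≤ 1 ∧ p.2 ≤ 1} = 1) (h01 : μ {p : ℝ × ℝ | p.1 ≤ 0 ∧ p.2 ≤ 1} = 0)
    (h10 : μ {p : ℝ × ℝ | p.1 ≤ 1 ∧ p.2 ≤ 0} = 0) :
    ∀ᵐ p ∂μ, p ∈ Ioc (0 : ℝ) 1 ×ˢ Ioc (0 : ℝ) 1 := by
  have h11' : ∀ᵐ p ∂μ, p ∈ {p : ℝ × ℝ | p.1 ≤ 1 ∧ p.2 ≤ 1} :=
    (mem_ae_iff_prob_eq_one (measurableSet_Iic.prod measurableSet_Iic)).2 h11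
  filter_upwards [h11', measure_eq_zero_iff_ae_notMem.1 h01, measure_eq_zero_iff_ae_notMem.1 h10]
    with p ⟨h1, h2⟩ h0 h0'
  exact ⟨⟨lt_of_not_ge fun h' => h0 ⟨h', h2⟩, h1⟩, lt_of_not_ge fun h' => h0' ⟨h1, h'⟩, h2⟩

lemma integral_eq_div_of_measureReal_le_eq_rpow {Ω : Type*} [MeasurableSpace Ω] {μ : Measure Ω}
    [IsProbabilityMeasure μ] {f : Ω → ℝ} (hf : AEMeasurable f μ)
    (hf01 : ∀ᵐ ω ∂μ, f ω ∈ Icc 0 1) {a : ℝ} (ha : 0 ≤ a)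
    (hcdf : ∀ s ∈ Ioo (0 : ℝ) 1, μ.real {ω | f ω ≤ s} = s ^ a) :
    ∫ ω, f ω ∂μ = a / (1 + a) := by
  have hint : Integrable f μ := (integrable_const (1 : ℝ)).mono' hf.aestronglyMeasurable
    (hf01.mono fun ω h => by rw [Real.norm_eq_abs, abs_of_nonneg h.1]; exact h.2)
  have htail : ∀ s ∈ Ioi (0 : ℝ),
      μ.real {ω | s < f ω} = (Ioo 0 1).indicator (fun s => 1 - s ^ a) s := by
    intro s hs
    rcases lt_or_ge s 1 with hs1 | hs1
    · rw [indicator_of_mem (show s ∈ Ioo 0 1 from ⟨hs, hs1⟩), ← hcdf s ⟨hs, hs1⟩,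
        ← probReal_compl_eq_one_sub₀ (nullMeasurableSet_le hf aemeasurable_const), compl_ofPred]
      simp only [not_le]
    · rw [indicator_of_notMem fun h => hs1.not_gt h.2, measureReal_eq_zero_iff]
      exact measure_eq_zero_iff_ae_notMem.2 (hf01.mono fun ω h h' => (h.2.trans hs1).not_gt h')
  rw [hint.integral_eq_integral_meas_lt (hf01.mono fun _ h => h.1),
    setIntegral_congr_fun measurableSet_Ioi htail, integral_indicator measurableSet_Ioo,
    Measure.restrict_restrict measurableSet_Ioo, inter_eq_self_of_subset_left Ioo_subset_Ioi_self,
    integral_Ioo_zero_one_one_sub_rpow (by linarith)]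

lemma measureReal_max_rpow_inv_le {μ : Measure (ℝ × ℝ)} (hμ : ∀ᵐ p ∂μ, 0 ≤ p.1 ∧ 0 ≤ p.2)
    {s t : ℝ} (hs : 0 ≤ s) (ht : t ∈ Ioo 0 1) :
    μ.real {p : ℝ × ℝ | max (p.1 ^ (1 / (1 - t))) (p.2 ^ (1 / t)) ≤ s} =
      μ.real {p : ℝ × ℝ | p.1 ≤ s ^ (1 - t) ∧ p.2 ≤ s ^ t} := by
  refine measureReal_congr ?_
  filter_upwards [hμ] with p hp
  exact propext (max_rpow_inv_le_iff hp.1 hp.2 hs ht)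

/-- if `μ` is a probability measure on `ℝ²` whose c.d.f. on
`[0,1]²` is the extreme-value copula `C`, then for `t ∈ (0,1)`,
`S(t) = ∫ max(x₁^{1/(1−t)}, x₂^{1/t}) dμ = A(t)/(1 + A(t))`, and consequently
`A(t) = S(t)/(1 − S(t))`. -/
theorem evCopula_S_eq (A : ℝ → ℝ)
    (hA : ∀ t ∈ Set.Icc (0 : ℝ) 1, max t (1 - t) ≤ A t ∧ A t ≤ 1)
    (μ : Measure (ℝ × ℝ)) [IsProbabilityMeasure μ]
    (hμ : ∀ u ∈ Set.Icc (0 : ℝ) 1, ∀ v ∈ Set.Icc (0 : ℝ) 1,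
      μ {p : ℝ × ℝ | p.1 ≤ u ∧ p.2 ≤ v} = ENNReal.ofReal (evCopula A u v))
    (t : ℝ) (ht : t ∈ Set.Ioo (0 : ℝ) 1) :
    (∫ p : ℝ × ℝ, max (p.1 ^ (1 / (1 - t))) (p.2 ^ (1 / t)) ∂μ) = A t / (1 + A t) ∧
      A t = (∫ p : ℝ × ℝ, max (p.1 ^ (1 / (1 - t))) (p.2 ^ (1 / t)) ∂μ) /
        (1 - ∫ p : ℝ × ℝ, max (p.1 ^ (1 / (1 - t))) (p.2 ^ (1 / t)) ∂μ) := by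
  have hpos : 0 < A t :=
    ht.1.trans_le ((le_max_left _ _).trans (hA t (Ioo_subset_Icc_self ht)).1)
  have h0 : (0 : ℝ) ∈ Icc (0 : ℝ) 1 := left_mem_Icc.2 zero_le_one
  have h1 : (1 : ℝ) ∈ Icc (0 : ℝ) 1 := right_mem_Icc.2 zero_le_one
  have hsq : ∀ᵐ p ∂μ, p ∈ Icc (0 : ℝ) 1 ×ˢ Icc (0 : ℝ) 1 :=
    (ae_mem_Ioc_prod_Ioc (by simp [hμ 1 h1 1 h1, evCopula]) (by simp [hμ 0 h0 1 h1, evCopula])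
      (by simp [hμ 1 h1 0 h0, evCopula])).mono fun p hp =>
        prod_mono Ioc_subset_Icc_self Ioc_subset_Icc_self hp
  have hS : ∫ p : ℝ × ℝ, max (p.1 ^ (1 / (1 - t))) (p.2 ^ (1 / t)) ∂μ = A t / (1 + A t) := by
    refine integral_eq_div_of_measureReal_le_eq_rpow (by fun_prop)
      (hsq.mono fun p hp => max_rpow_mem_Icc hp.1 hp.2 (by simp [ht.2.le]) (by simp [ht.1.le]))
      hpos.le fun s hs => ?_
    have hmem : ∀ r ∈ Icc (0 : ℝ) 1, s ^ r ∈ Icc (0 : ℝ) 1 := fun r hr =>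
      ⟨rpow_nonneg hs.1.le r, rpow_le_one hs.1.le hs.2.le hr.1⟩
    rw [measureReal_max_rpow_inv_le (hsq.mono fun p hp => ⟨hp.1.1, hp.2.1⟩) hs.1.le ht,
      measureReal_def, hμ _ (hmem _ ⟨(sub_pos.2 ht.2).le, by linarith [ht.1]⟩) _
        (hmem _ (Ioo_subset_Icc_self ht)),
      evCopula_rpow_one_sub_rpow A t hs, ENNReal.toReal_ofReal (rpow_nonneg hs.1.le _)]
  refine ⟨hS, ?_⟩
  rw [hS]
  field_simp
  ring
end

section
/- Let d ≥ 2, let A be a real-valued function on the unit simplex S_{d−1} = {(t₂,…,t_d) ∈ [0,1]^{d−1} : t₂ + ⋯ + t_d ≤ 1} satisfying max(1 − ∑_{j=2}^{d} t_j, t₂, …, t_d) ≤ A(t) ≤ 1 for all t ∈ S_{d−1}, let C be the associated d-variate extreme-value copula, and let μ be a probability measure on ℝ^d such that μ{x : x_j ≤ u_j for all j = 1,…,d} = C(u) for all u ∈ [0,1]^d. Then for every t = (t₂,…,t_d) in the interior of the simplex (i.e., t_j > 0 for j = 2,…,d and t₁ = 1 − ∑_{j=2}^{d} t_j > 0), the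 quantity S(t) = ∫ max_{1 ≤ j ≤ d} x_j^{1/t_j} dμ(x) equals A(t)/(1 + A(t)), and consequently A(t) = S(t)/(1 − S(t)). -/
/-!
Write `w = (t₁, t)` for the weight vector. Along the curve `s ↦ (s ^ w₁, …, s ^ w_d)` the
exponent of the extreme-value copula collapses to `log s · A(t)`, so
`C(s ^ w₁, …, s ^ w_d) = s ^ A(t)`. Since `max_j U_j ^ (1 / w_j) ≤ s` exactly when
`U_j ≤ s ^ w_j` for all `j`, the variable `max_j U_j ^ (1 / w_j)` has distribution function
`s ^ A(t)` on `[0, 1]`, and the layer-cake formula gives its mean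
`∫₀¹ (1 - s ^ A(t)) ds = A(t) / (1 + A(t))`.
-/

open MeasureTheory

/-- The `d`-variate extreme-value copula (`d = n + 1 ≥ 2`) associated with a
Pickands dependence function `A` on the unit simplex (encoded as `Fin n → ℝ`). -/
noncomputable def evCopulaD {n : ℕ} (A : (Fin n → ℝ) → ℝ) (u : Fin (n + 1) → ℝ) : ℝ :=
  if ∃ j, u j = 0 then 0
  else if ∀ j, u j = 1 then 1
  else Real.exp ((∑ j, Real.log (u j)) *
    A fun j => Real.log (u j.succ) / ∑ k, Real.log (u k))

open Set

theorem integral_one_sub_rpow {a : ℝ} (ha : -1 < a) :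
    ∫ s in (0 : ℝ)..1, (1 - s ^ a) = a / (1 + a) := by
  rw [intervalIntegral.integral_sub intervalIntegrable_const
      (intervalIntegral.intervalIntegrable_rpow' ha),
    integral_rpow (Or.inl ha), intervalIntegral.integral_const, Real.one_rpow,
    Real.zero_rpow (by linarith), smul_eq_mul, add_comm a 1]
  have : 1 + a ≠ 0 := by linarith
  field_simp
  ring

theorem integral_eq_div_of_measure_le_eq_rpow {Ω : Type*} [MeasurableSpace Ω] {μ : Measure Ω}
    [IsProbabilityMeasure μ] {f : Ω → ℝ} (hf : AEMeasurable f μ)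
    (hf01 : ∀ᵐ ω ∂μ, f ω ∈ Icc 0 1) {a : ℝ} (ha : 0 ≤ a)
    (hcdf : ∀ s ∈ Ioo (0 : ℝ) 1, μ {ω | f ω ≤ s} = ENNReal.ofReal (s ^ a)) :
    ∫ ω, f ω ∂μ = a / (1 + a) := by
  have hint : Integrable f μ := by
    refine Integrable.of_bound hf.aestronglyMeasurable 1 ?_
    filter_upwards [hf01] with ω hω
    rw [Real.norm_eq_abs, abs_le]
    exact ⟨by linarith [hω.1], hω.2⟩
  have hvanish : ∀ s ∈ Ici (1 : ℝ), μ.real {ω | s < f ω} = 0 := by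
    intro s hs
    rw [measureReal_eq_zero_iff, measure_eq_zero_iff_ae_notMem]
    filter_upwards [hf01] with ω hω
    exact not_lt.2 (hω.2.trans hs)
  have htail : ∀ s ∈ Ioc (0 : ℝ) 1, μ.real {ω | s < f ω} = 1 - s ^ a := by
    rintro s ⟨hs0, hs1⟩
    rcases hs1.eq_or_lt with rfl | hs1
    · rw [hvanish 1 (mem_Ici.2 le_rfl), Real.one_rpow, sub_self]
    have hcompl : {ω | s < f ω} = {ω | f ω ≤ s}ᶜ := by
      ext ω
      simp
    rw [measureReal_def, hcompl,
      prob_compl_eq_one_sub₀ (nullMeasurableSet_le hf aemeasurable_const), hcdf s ⟨hs0, hs1⟩,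
      ← ENNReal.ofReal_one, ← ENNReal.ofReal_sub _ (by positivity),
      ENNReal.toReal_ofReal (sub_nonneg.2 (Real.rpow_le_one hs0.le hs1.le ha))]
  calc ∫ ω, f ω ∂μ = ∫ s in Ioi 0, μ.real {ω | s < f ω} :=
        hint.integral_eq_integral_meas_lt (hf01.mono fun _ hω => hω.1)
    _ = ∫ s in Ioc 0 1, μ.real {ω | s < f ω} :=
        setIntegral_eq_of_subset_of_forall_sdiff_eq_zero measurableSet_Ioi Ioc_subset_Ioi_self
          fun s hs => hvanish s (le_of_not_ge fun h => hs.2 ⟨hs.1, h⟩)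
    _ = ∫ s in Ioc 0 1, (1 - s ^ a) := setIntegral_congr_fun measurableSet_Ioc htail
    _ = a / (1 + a) := by
        rw [← intervalIntegral.integral_of_le zero_le_one, integral_one_sub_rpow (by linarith)]

theorem ae_mem_Icc_of_measure_Iic {ι : Type*} [Finite ι] [DecidableEq ι]
    {μ : Measure (ι → ℝ)} [IsProbabilityMeasure μ] (h1 : μ (Iic 1) = 1)
    (h0 : ∀ j, μ (Iic (Function.update (1 : ι → ℝ) j 0)) = 0) :
    ∀ᵐ x ∂μ, x ∈ Icc 0 1 := by
  have hle : ∀ᵐ x ∂μ, x ≤ 1 :=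
    (ae_iff_measure_eq measurableSet_Iic.nullMeasurableSet).2 (by rw [measure_univ]; exact h1)
  have hnot : ∀ᵐ x ∂μ, ∀ j, x ∉ Iic (Function.update (1 : ι → ℝ) j 0) :=
    ae_all_iff.2 fun j => measure_eq_zero_iff_ae_notMem.1 (h0 j)
  filter_upwards [hle, hnot] with x hx1 hx0
  refine ⟨fun j => le_of_not_gt fun hxj => hx0 j fun k => ?_, hx1⟩
  rcases eq_or_ne k j with rfl | hkj
  · simpa using hxj.le
  · simpa [hkj] using hx1 k

theorem iSup_rpow_mem_Icc {ι : Type*} [Finite ι] [Nonempty ι] {x p : ι → ℝ}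
    (hx : x ∈ Icc 0 1) (hp : ∀ j, 0 ≤ p j) : ⨆ j, x j ^ p j ∈ Icc 0 1 := by
  have hbdd : BddAbove (range fun j => x j ^ p j) := (finite_range _).bddAbove
  obtain ⟨j⟩ := ‹Nonempty ι›
  exact ⟨(Real.rpow_nonneg (hx.1 j) _).trans (le_ciSup hbdd j),
    ciSup_le fun j => Real.rpow_le_one (hx.1 j) (hx.2 j) (hp j)⟩

theorem iSup_rpow_one_div_le_iff {ι : Type*} [Finite ι] [Nonempty ι] {x w : ι → ℝ} {s : ℝ}
    (hx : 0 ≤ x) (hw : ∀ j, 0 < w j) (hs : 0 ≤ s) :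
    ⨆ j, x j ^ (1 / w j) ≤ s ↔ x ≤ fun j => s ^ w j := by
  rw [ciSup_le_iff (finite_range _).bddAbove, Pi.le_def]
  simp only [one_div, Real.rpow_inv_le_iff_of_pos (hx _) hs (hw _)]

theorem evCopulaD_rpow {n : ℕ} (A : (Fin n → ℝ) → ℝ) {w : Fin (n + 1) → ℝ}
    (hw : ∑ j, w j = 1) {s : ℝ} (hs0 : 0 < s) (hs1 : s < 1) :
    evCopulaD A (fun j => s ^ w j) = s ^ A (Fin.tail w) := by
  have hlog : ∀ j, Real.log (s ^ w j) = w j * Real.log s := fun j => Real.log_rpow hs0 _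
  have hlog_ne : Real.log s ≠ 0 := (Real.log_neg hs0 hs1).ne
  have hsum : ∑ j, Real.log (s ^ w j) = Real.log s := by
    simp only [hlog, ← Finset.sum_mul, hw, one_mul]
  have hne_one : ¬ ∀ j, s ^ w j = 1 := by
    intro h
    apply hlog_ne
    simp [← hsum, h]
  rw [evCopulaD, if_neg (by simp [(Real.rpow_pos_of_pos hs0 _).ne']), if_neg hne_one, hsum]
  simp only [hlog, mul_div_assoc, div_self hlog_ne, mul_one]
  rw [Real.rpow_def_of_pos hs0]
  rfl

theorem ae_mem_Icc_of_evCopulaD {n : ℕ} {A : (Fin n → ℝ) → ℝ}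
    {μ : Measure (Fin (n + 1) → ℝ)} [IsProbabilityMeasure μ]
    (hμ : ∀ u ∈ Icc (0 : Fin (n + 1) → ℝ) 1, μ (Iic u) = ENNReal.ofReal (evCopulaD A u)) :
    ∀ᵐ x ∂μ, x ∈ Icc 0 1 := by
  refine ae_mem_Icc_of_measure_Iic ?_ fun j => ?_
  · simp [hμ 1 ⟨zero_le_one, le_rfl⟩, evCopulaD]
  · have hmem : Function.update (1 : Fin (n + 1) → ℝ) j 0 ∈ Icc 0 1 := by
      constructor <;> intro k <;> rcases eq_or_ne k j with rfl | hkj <;> simp [*]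
    rw [hμ _ hmem, evCopulaD, if_pos ⟨j, by simp⟩, ENNReal.ofReal_zero]

theorem measure_iSup_rpow_le_of_evCopulaD {n : ℕ} {A : (Fin n → ℝ) → ℝ}
    {μ : Measure (Fin (n + 1) → ℝ)} [IsProbabilityMeasure μ]
    (hμ : ∀ u ∈ Icc (0 : Fin (n + 1) → ℝ) 1, μ (Iic u) = ENNReal.ofReal (evCopulaD A u))
    {w : Fin (n + 1) → ℝ} (hw_pos : ∀ j, 0 < w j) (hw_sum : ∑ j, w j = 1)
    {s : ℝ} (hs : s ∈ Ioo 0 1) :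
    μ {x | ⨆ j, x j ^ (1 / w j) ≤ s} = ENNReal.ofReal (s ^ A (Fin.tail w)) := by
  have hset : {x | ⨆ j, x j ^ (1 / w j) ≤ s} =ᵐ[μ] Iic fun j => s ^ w j := by
    filter_upwards [ae_mem_Icc_of_evCopulaD hμ] with x hx
    exact propext (iSup_rpow_one_div_le_iff hx.1 hw_pos hs.1.le)
  rw [measure_congr hset, hμ _ ⟨fun j => (Real.rpow_pos_of_pos hs.1 _).le,
      fun j => Real.rpow_le_one hs.1.le hs.2.le (hw_pos j).le⟩,
    evCopulaD_rpow A hw_sum hs.1 hs.2]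

theorem evCopulaD_S_eq_general (n : ℕ) (A : (Fin n → ℝ) → ℝ)
    (hA : ∀ t : Fin n → ℝ, (∀ j, 0 ≤ t j) → ∑ j, t j ≤ 1 →
      (1 - ∑ j, t j ≤ A t) ∧ (∀ j, t j ≤ A t) ∧ A t ≤ 1)
    (μ : Measure (Fin (n + 1) → ℝ)) [IsProbabilityMeasure μ]
    (hμ : ∀ u : Fin (n + 1) → ℝ, (∀ j, u j ∈ Set.Icc (0 : ℝ) 1) →
      μ {x | ∀ j, x j ≤ u j} = ENNReal.ofReal (evCopulaD A u))
    (t : Fin n → ℝ) (ht0 : ∀ j, 0 < t j) (ht1 : ∑ j, t j < 1) :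
    (∫ x, (⨆ j, x j ^ (1 / (Fin.cons (1 - ∑ i, t i) t : Fin (n + 1) → ℝ) j)) ∂μ) =
        A t / (1 + A t) ∧
      A t =
        (∫ x, (⨆ j, x j ^ (1 / (Fin.cons (1 - ∑ i, t i) t : Fin (n + 1) → ℝ) j)) ∂μ) /
        (1 - ∫ x, (⨆ j, x j ^ (1 / (Fin.cons (1 - ∑ i, t i) t : Fin (n + 1) → ℝ) j)) ∂μ) := by
  set w : Fin (n + 1) → ℝ := Fin.cons (1 - ∑ i, t i) t
  have hw_pos : ∀ j, 0 < w j := Fin.cases (by simpa [w] using ht1) (by simpa [w] using ht0)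
  have hw_sum : ∑ j, w j = 1 := by simp [w, Fin.sum_cons]
  have hA_pos : 0 < A t := (sub_pos.2 ht1).trans_le (hA t (fun j => (ht0 j).le) ht1.le).1
  have hcdf : ∀ u ∈ Icc 0 1, μ (Iic u) = ENNReal.ofReal (evCopulaD A u) :=
    fun u hu => hμ u fun j => ⟨hu.1 j, hu.2 j⟩
  have hS : ∫ x, (⨆ j, x j ^ (1 / w j)) ∂μ = A t / (1 + A t) := by
    refine integral_eq_div_of_measure_le_eq_rpow
      (Measurable.iSup fun j => by fun_prop).aemeasurable ?_ hA_pos.le fun s hs => ?_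
    · filter_upwards [ae_mem_Icc_of_evCopulaD hcdf] with x hx
      exact iSup_rpow_mem_Icc hx fun j => (one_div_pos.2 (hw_pos j)).le
    · rw [measure_iSup_rpow_le_of_evCopulaD hcdf hw_pos hw_sum hs, Fin.tail_cons]
  refine ⟨hS, ?_⟩
  have : 1 + A t ≠ 0 := by linarith
  rw [hS]
  field_simp
  ring

/-- if `μ` is a probability measure on `ℝ^d` whose c.d.f. on
`[0,1]^d` is the extreme-value copula `C`, then for `t = (t₂,…,t_d)` in the
interior of the simplex (with `t₁ = 1 − ∑_{j≥2} t_j > 0`),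
`S(t) = ∫ max_j x_j^{1/t_j} dμ = A(t)/(1 + A(t))`, and consequently
`A(t) = S(t)/(1 − S(t))`. -/
theorem evCopulaD_S_eq (n : ℕ) (hn : 1 ≤ n) (A : (Fin n → ℝ) → ℝ)
    (hA : ∀ t : Fin n → ℝ, (∀ j, 0 ≤ t j) → ∑ j, t j ≤ 1 →
      (1 - ∑ j, t j ≤ A t) ∧ (∀ j, t j ≤ A t) ∧ A t ≤ 1)
    (μ : Measure (Fin (n + 1) → ℝ)) [IsProbabilityMeasure μ]
    (hμ : ∀ u : Fin (n + 1) → ℝ, (∀ j, u j ∈ Set.Icc (0 : ℝ) 1) →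
      μ {x | ∀ j, x j ≤ u j} = ENNReal.ofReal (evCopulaD A u))
    (t : Fin n → ℝ) (ht0 : ∀ j, 0 < t j) (ht1 : ∑ j, t j < 1) :
    (∫ x, (⨆ j, x j ^ (1 / (Fin.cons (1 - ∑ i, t i) t : Fin (n + 1) → ℝ) j)) ∂μ) =
        A t / (1 + A t) ∧
      A t =
        (∫ x, (⨆ j, x j ^ (1 / (Fin.cons (1 - ∑ i, t i) t : Fin (n + 1) → ℝ) j)) ∂μ) /
        (1 - ∫ x, (⨆ j, x j ^ (1 / (Fin.cons (1 - ∑ i, t i) t : Fin (n + 1) → ℝ) j)) ∂μ) :=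
  evCopulaD_S_eq_general n A hA μ hμ t ht0 ht1
end
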